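/- Let (D, F) be a consistent classical-deterministic causal model, and call a model reachable from (D, F) if it is obtained by a finite sequence of steps, each step fixing an output value o_s of a source vertex s of the current model's causal structure, passing to the reduced model, and restricting its causal structure to the dependency graph of the reduced parameters. Suppose that every reachable model with at least two vertices has at least one source vertex in its (dependency-graph) causal structure. Then for every family of interventions (μ_v)_{v∈V}, the attained correlation p(a|x) = [g(x) = a] is a causal correlation. -/

import Mathlib

set_option autoImplicit false

/-- A function `f` on a dependent product depends only on the coordinates in `S`:
its value is unchanged when the argument is modified outside of `S`. -/
def DependsOnlyOn {V : Type} {O : V → Type} {α : Type} (f : (∀ v, O v) → α) (S : Set V) : Prop :=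
  ∀ o o' : ∀ v, O v, (∀ v ∈ S, o v = o' v) → f o = f o'

/-- A function `f` on a dependent product depends nontrivially on the coordinate `ℓ`:
there are two arguments that differ only at `ℓ` and get assigned different values. -/
def DependsNontriv {V : Type} {O : V → Type} {α : Type} (f : (∀ v, O v) → α) (ℓ : V) : Prop :=
  ∃ o o' : ∀ v, O v, (∀ k, k ≠ ℓ → o k = o' k) ∧ f o ≠ f o'

/-- `c` is a directed cycle (of length `n`, with pairwise distinct vertices) in the
digraph with edge relation `E`. -/
def IsDirCycle {V : Type} (E : V → V → Prop) {n : ℕ} (c : ZMod n → V) : Prop :=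
  0 < n ∧ Function.Injective c ∧ ∀ i, E (c i) (c (i + 1))

/-- The directed cycle `c` has a chord: an edge `c i → c j` with `j ≠ i + 1 (mod n)`. -/
def HasChord {V : Type} (E : V → V → Prop) {n : ℕ} (c : ZMod n → V) : Prop :=
  ∃ i j : ZMod n, E (c i) (c j) ∧ j ≠ i + 1

/-- A digraph is a siblings-on-cycles graph if every directed cycle contains two
(distinct) vertices that share a common parent. -/
def SiblingsOnCycles {V : Type} (E : V → V → Prop) : Prop :=
  ∀ (n : ℕ) (c : ZMod n → V), IsDirCycle E c →
    ∃ i j : ZMod n, i ≠ j ∧ ∃ p, E p (c i) ∧ E p (c j)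

open Classical in
/-- The deterministic correlation `p(a|x) = [g(x) = a]` induced by a function `g`. -/
noncomputable def detCorr {V : Type} {X A : V → Type} (g : (∀ v, X v) → ∀ v, A v) :
    (∀ v, X v) → (∀ v, A v) → ℝ :=
  fun x a => if a = g x then 1 else 0

/-- A classical-deterministic causal model: a finite vertex set `V`, a digraph `E`
(the causal structure), finite nonempty output- and input-sets `O v`, `I v`, and the
model parameters `ω v : (∀ ℓ, O ℓ) → I v`.  (That `ω v` only depends on the
coordinates of the parents of `v` is expressed by `StructComp` below.) -/
structure CDModel where
  V : Type
  [fintV : Fintype V]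
  [decV : DecidableEq V]
  E : V → V → Prop
  O : V → Type
  I : V → Type
  [fintO : ∀ v, Fintype (O v)]
  [neO : ∀ v, Nonempty (O v)]
  [fintI : ∀ v, Fintype (I v)]
  [neI : ∀ v, Nonempty (I v)]
  ω : ∀ v, (∀ ℓ, O ℓ) → I v

attribute [instance] CDModel.fintV CDModel.decV CDModel.fintO CDModel.neO CDModel.fintI CDModel.neI

namespace CDModel

variable (M : CDModel)

/-- The parents of `v`. -/
def Pa (v : M.V) : Set M.V := {k | M.E k v}

/-- The children of `s`. -/
def Ch (s : M.V) : Set M.V := {v | M.E s v}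

/-- A source vertex: a vertex without parents. -/
def IsSource (s : M.V) : Prop := ∀ k, ¬ M.E k s

/-- The digraph `E` is a causal structure for the model parameters, i.e. each `ω v`
is a function of the outputs of the parents of `v` only. -/
def StructComp : Prop := ∀ v, DependsOnlyOn (M.ω v) (M.Pa v)

/-- Faithfulness: each `ω v` depends nontrivially on each of the parents of `v`. -/
def Faithful : Prop := ∀ ℓ v, M.E ℓ v → DependsNontriv (M.ω v) ℓ

open Classical in
/-- `g` witnesses the consistency condition for the interventions `μ`: for all
settings `x` and results `a`, the number of pairs `(i, o)` with `ω v o = i v` and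
`μ v (x v, i v) = (a v, o v)` (for all `v`) is `1` if `a = g x` and `0` otherwise. -/
def IsWitness (X A : M.V → Type) (μ : ∀ v, X v × M.I v → A v × M.O v)
    (g : (∀ v, X v) → ∀ v, A v) : Prop :=
  ∀ (x : ∀ v, X v) (a : ∀ v, A v),
    Nat.card {io : (∀ v, M.I v) × (∀ v, M.O v) //
      (∀ v, M.ω v io.2 = io.1 v) ∧ ∀ v, μ v (x v, io.1 v) = (a v, io.2 v)} =
    if a = g x then 1 else 0

/-- Consistency: every family of interventions admits a witnessing function `g`. -/
def Consistent : Prop :=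
  ∀ (X A : M.V → Type)
    (_ : ∀ v, Fintype (X v)) (_ : ∀ v, Nonempty (X v))
    (_ : ∀ v, Fintype (A v)) (_ : ∀ v, Nonempty (A v))
    (μ : ∀ v, X v × M.I v → A v × M.O v),
    ∃ g : (∀ v, X v) → ∀ v, A v, M.IsWitness X A μ g

/-- Extend an assignment of outputs on `V ∖ {s}` to all of `V` by putting `os` at `s`. -/
def extendAt (s : M.V) (os : M.O s) (o : ∀ v : {v : M.V // v ≠ s}, M.O v.1) (ℓ : M.V) :
    M.O ℓ :=
  if h : ℓ = s then cast (congrArg M.O h.symm) os else o ⟨ℓ, h⟩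

/-- The reduced causal model obtained by fixing the output `os` of the source `s`:
the vertex `s` and all its incident edges are removed, and each model parameter is
partially applied at the coordinate `s` (which keeps `ω v` unchanged for non-children
of `s`). -/
def reduce (s : M.V) (os : M.O s) : CDModel where
  V := {v : M.V // v ≠ s}
  E := fun a b => M.E a.1 b.1
  O := fun v => M.O v.1
  I := fun v => M.I v.1
  ω := fun v o => M.ω v.1 (M.extendAt s os o)

/-- The dependency graph of the model parameters: edge `ℓ → v` iff `ω v` depends
nontrivially on its `O ℓ`-coordinate. -/
def depGraph : M.V → M.V → Prop := fun ℓ v => DependsNontriv (M.ω v) ℓ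

/-- Replace the causal structure by the dependency graph of the model parameters. -/
def restrictDep : CDModel where
  V := M.V
  E := M.depGraph
  O := M.O
  I := M.I
  ω := M.ω

/-- One step of the flow: fix an output value of a source, pass to the reduced model,
and restrict its causal structure to the dependency graph of the reduced parameters. -/
def flowStep (s : M.V) (os : M.O s) : CDModel := (M.reduce s os).restrictDep

end CDModel

/-- Reachability of one causal model from another by a finite sequence of flow steps,
each fixing an output value of a source vertex of the current causal structure. -/
inductive Reaches : CDModel → CDModel → Prop where
  | refl (M : CDModel) : Reaches M M
  | tail {M N : CDModel} (s : M.V) (hs : M.IsSource s) (os : M.O s)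
      (h : Reaches (M.flowStep s os) N) : Reaches M N

/-- Causal correlations, defined recursively: a family of correlations on at most one
agent is causal; and a correlation is causal if it decomposes as a convex combination
over a first agent `v` of a local conditional distribution for `v` times correlations
for the remaining agents (depending on `v`'s setting and result) that are again causal. -/
inductive IsCausal : ∀ (S : Type) (X A : S → Type), ((∀ v, X v) → (∀ v, A v) → ℝ) → Prop where
  | base {S : Type} [Fintype S] {X A : S → Type}
      (p : (∀ v, X v) → (∀ v, A v) → ℝ) (h : Fintype.card S ≤ 1) : IsCausal S X A p
  | step {S : Type} [Fintype S] [DecidableEq S] {X A : S → Type} [∀ v, Fintype (A v)]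
      (p : (∀ v, X v) → (∀ v, A v) → ℝ)
      (q : S → ℝ) (hq0 : ∀ v, 0 ≤ q v) (hq1 : ∑ v, q v = 1)
      (pv : ∀ v : S, X v → A v → ℝ)
      (hpv0 : ∀ v x a, 0 ≤ pv v x a) (hpv1 : ∀ v x, ∑ a, pv v x a = 1)
      (pr : ∀ v : S, X v → A v →
        (∀ u : {u : S // u ≠ v}, X u.1) → (∀ u : {u : S // u ≠ v}, A u.1) → ℝ)
      (hpr : ∀ v xv av, IsCausal {u : S // u ≠ v} (fun u => X u.1) (fun u => A u.1) (pr v xv av))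
      (hdec : ∀ x a, p x a =
        ∑ v, q v * pv v (x v) (a v) * pr v (x v) (a v) (fun u => x u.1) (fun u => a u.1)) :
      IsCausal S X A p

/-- Convenience constructor for classical-deterministic causal models. -/
abbrev mkModel (V : Type) [Fintype V] [DecidableEq V] (E : V → V → Prop) (O I : V → Type)
    [∀ v, Fintype (O v)] [∀ v, Nonempty (O v)] [∀ v, Fintype (I v)] [∀ v, Nonempty (I v)]
    (ω : ∀ v, (∀ ℓ, O ℓ) → I v) : CDModel :=
  { V := V, E := E, O := O, I := I, ω := ω }

/-!
Induction on the number of vertices. A source `s` of the causal structure receives a constant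
input, so its result and its output are functions `f(x_s)`, `o_s(x_s)` of its setting alone.
Reducing at `o_s(x_s)` and passing to the dependency graph gives a smaller model that is again
consistent (extend its interventions by letting `s` always output `o_s(x_s)`), trivially
compatible with its causal structure, and still subject to the hypothesis on reachable models;
its witness `g'_{x_s}` describes the remaining agents. Hence
`[g(x) = a] = [a_s = f(x_s)] · [a_{V∖s} = g'_{x_s}(x_{V∖s})]`, which is causal with `s` acting
first, the second factor being causal by induction.
-/

theorem dependsOnlyOn_setOf_dependsNontriv {V : Type} [Finite V] {O : V → Type} {α : Type}
    (f : (∀ v, O v) → α) : DependsOnlyOn f {ℓ | DependsNontriv f ℓ} := by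
  classical
  cases nonempty_fintype V
  suffices key : ∀ t : Finset V, ∀ o o' : ∀ v, O v, (∀ v ∉ t, o v = o' v) →
      (∀ v ∈ t, ¬ DependsNontriv f v) → f o = f o' by
    intro o o' h
    refine key {v | ¬ DependsNontriv f v} o o' (fun v hv => h v ?_) fun v hv => ?_
    · simpa using hv
    · simpa using hv
  intro t
  induction t using Finset.induction_on with
  | empty => exact fun o o' h _ => congrArg f (funext fun v => h v (Finset.notMem_empty v))
  | insert a t _ ih =>
    intro o o' h hnd
    have hupdate : f o = f (Function.update o a (o' a)) := by
      by_contra hne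
      exact hnd a (Finset.mem_insert_self a t)
        ⟨o, _, fun k hk => (Function.update_of_ne hk _ _).symm, hne⟩
    refine hupdate.trans (ih _ _ (fun v hv => ?_) fun v hv => hnd v (Finset.mem_insert_of_mem hv))
    by_cases hva : v = a
    · subst hva
      simp
    · rw [Function.update_of_ne hva]
      exact h v (by simp [hva, hv])

theorem ite_eq_mul_ite_restrict {V : Type} [DecidableEq V] {A : V → Type} (s : V)
    (a b : ∀ v, A v) [Decidable (a = b)] [Decidable (a s = b s)]
    [Decidable ((fun u : {u // u ≠ s} => a u.1) = fun u : {u // u ≠ s} => b u.1)] :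
    (if a = b then (1 : ℝ) else 0) =
      (if a s = b s then 1 else 0) *
        if (fun u : {u // u ≠ s} => a u.1) = fun u : {u // u ≠ s} => b u.1 then 1 else 0 := by
  have hsplit := ((Equiv.piSplitAt s A).injective.eq_iff (a := a) (b := b)).symm
  simp only [Equiv.piSplitAt_apply, Prod.mk.injEq] at hsplit
  simp only [hsplit, ite_and]
  split_ifs <;> simp

theorem isCausal_zero {S : Type} [Fintype S] {X A : S → Type} [∀ v, Fintype (A v)]
    [∀ v, Nonempty (A v)] : IsCausal S X A 0 := by
  by_cases hcard : Fintype.card S ≤ 1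
  · exact .base _ hcard
  obtain ⟨v₀⟩ : Nonempty S := Fintype.card_pos_iff.mp (by omega)
  classical
  refine .step 0 (fun v => if v = v₀ then 1 else 0) (fun v => by positivity) (by simp)
    (fun v _ a => if a = Classical.arbitrary (A v) then 1 else 0) (fun v _ a => by positivity)
    (fun v _ => by simp) (fun _ _ _ => 0) (fun v _ _ => isCausal_zero) (fun _ _ => by simp)
termination_by Fintype.card S
decreasing_by classical exact Fintype.card_subtype_lt (x := v) (by simp)

theorem IsCausal.of_first {S : Type} [Fintype S] [DecidableEq S] {X A : S → Type}
    [∀ v, Fintype (A v)] [∀ v, Nonempty (A v)] (s : S) (p : (∀ v, X v) → (∀ v, A v) → ℝ)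
    (ps : X s → A s → ℝ) (hps0 : ∀ x a, 0 ≤ ps x a) (hps1 : ∀ x, ∑ a, ps x a = 1)
    (pr : X s → A s → (∀ u : {u // u ≠ s}, X u.1) → (∀ u : {u // u ≠ s}, A u.1) → ℝ)
    (hpr : ∀ xs as, IsCausal {u // u ≠ s} (fun u => X u.1) (fun u => A u.1) (pr xs as))
    (hp : ∀ x a, p x a = ps (x s) (a s) * pr (x s) (a s) (fun u => x u.1) (fun u => a u.1)) :
    IsCausal S X A p := by
  classical
  -- only `s` gets positive weight; the other agents just need some causal filler
  refine .step p (fun v => if v = s then 1 else 0) (fun v => by positivity) (by simp)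
    (Function.update (fun v _ a => if a = Classical.arbitrary (A v) then 1 else 0) s ps)
    (fun v x a => ?_) (fun v x => ?_) (Function.update (fun _ _ _ => 0) s pr)
    (fun v xv av => ?_) (fun x a => ?_)
  · rcases eq_or_ne v s with rfl | hv
    · simpa using hps0 x a
    · simp only [Function.update_of_ne hv]
      positivity
  · rcases eq_or_ne v s with rfl | hv
    · simpa using hps1 x
    · simp [Function.update_of_ne hv]
  · rcases eq_or_ne v s with rfl | hv
    · simpa using hpr xv av
    · simpa only [Function.update_of_ne hv] using isCausal_zero
  · rw [Finset.sum_eq_single s (fun v _ hv => by simp [hv]) (by simp)]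
    simpa using hp x a

namespace CDModel

variable {M : CDModel}

def IsSolution {X A : M.V → Type} (μ : ∀ v, X v × M.I v → A v × M.O v) (x : ∀ v, X v)
    (a : ∀ v, A v) (o : ∀ v, M.O v) : Prop :=
  ∀ v, μ v (x v, M.ω v o) = (a v, o v)

/-- The inputs of a pair counted in `IsWitness` are forced to be `i = ω o`. -/
theorem natCard_inputOutput_eq_natCard_isSolution {X A : M.V → Type}
    (μ : ∀ v, X v × M.I v → A v × M.O v) (x : ∀ v, X v) (a : ∀ v, A v) :
    Nat.card {io : (∀ v, M.I v) × (∀ v, M.O v) //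
      (∀ v, M.ω v io.2 = io.1 v) ∧ ∀ v, μ v (x v, io.1 v) = (a v, io.2 v)} =
    Nat.card {o // M.IsSolution μ x a o} :=
  Nat.card_congr
    { toFun := fun io => ⟨io.1.2, fun v => (io.2.1 v).symm ▸ io.2.2 v⟩
      invFun := fun o => ⟨(fun v => M.ω v o.1, o.1), fun _ => rfl, o.2⟩
      left_inv := fun ⟨_, hω, _⟩ => Subtype.ext (Prod.ext (funext hω) rfl)
      right_inv := fun _ => rfl }

open Classical in
theorem isWitness_iff {X A : M.V → Type} {μ : ∀ v, X v × M.I v → A v × M.O v}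
    {g : (∀ v, X v) → ∀ v, A v} :
    M.IsWitness X A μ g ↔
      ∀ x a, Nat.card {o // M.IsSolution μ x a o} = if a = g x then 1 else 0 := by
  simp only [IsWitness, natCard_inputOutput_eq_natCard_isSolution]

section Witness

variable {X A : M.V → Type} {μ : ∀ v, X v × M.I v → A v × M.O v} {g : (∀ v, X v) → ∀ v, A v}

theorem IsWitness.exists_isSolution (hg : M.IsWitness X A μ g) (x : ∀ v, X v) :
    ∃ o, M.IsSolution μ x (g x) o := by
  have hcard := isWitness_iff.1 hg x (g x)
  rw [if_pos rfl] at hcard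
  obtain ⟨⟨o, ho⟩⟩ := (Nat.card_pos_iff.1 (hcard ▸ Nat.one_pos)).1
  exact ⟨o, ho⟩

theorem IsWitness.eq_of_isSolution (hg : M.IsWitness X A μ g) {x : ∀ v, X v} {a : ∀ v, A v}
    {o : ∀ v, M.O v} (ho : M.IsSolution μ x a o) : a = g x := by
  have hcard := isWitness_iff.1 hg x a
  by_contra hne
  rw [if_neg hne] at hcard
  have : Nonempty {o // M.IsSolution μ x a o} := ⟨⟨o, ho⟩⟩
  exact Nat.card_pos.ne' hcard

end Witness

theorem StructComp.omega_eq_of_isSource (hM : M.StructComp) {s : M.V} (hs : M.IsSource s)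
    (o o' : ∀ v, M.O v) : M.ω s o = M.ω s o' :=
  hM s o o' fun v hv => absurd hv (hs v)

theorem structComp_restrictDep (M : CDModel) : M.restrictDep.StructComp :=
  fun _ => dependsOnlyOn_setOf_dependsNontriv _

section Reduce

variable (s : M.V) (os : M.O s)

@[simp]
theorem extendAt_self (o : ∀ u : {v // v ≠ s}, M.O u.1) : M.extendAt s os o s = os := by
  simp [extendAt]

@[simp]
theorem extendAt_val (o : ∀ u : {v // v ≠ s}, M.O u.1) (u : {v // v ≠ s}) :
    M.extendAt s os o u.1 = o u :=
  dif_neg u.2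

theorem extendAt_restrict (o : ∀ v, M.O v) : M.extendAt s (o s) (fun u => o u.1) = o := by
  funext v
  by_cases hv : v = s
  · subst hv
    simp
  · exact extendAt_val s (o s) _ ⟨v, hv⟩

theorem natCard_eq_natCard_extendAt (P : (∀ u : {v // v ≠ s}, M.O u.1) → Prop) :
    Nat.card {o' // P o'} = Nat.card {o : ∀ v, M.O v // o s = os ∧ P fun u => o u.1} :=
  Nat.card_congr
    { toFun := fun o' => ⟨M.extendAt s os o'.1, extendAt_self s os _, by simpa using o'.2⟩
      invFun := fun o => ⟨fun u => o.1 u.1, o.2.2⟩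
      left_inv := fun o' => by simp
      right_inv := fun ⟨o, hos, _⟩ => Subtype.ext (hos ▸ extendAt_restrict s o) }

theorem IsSolution.reduce {X A : M.V → Type} {μ : ∀ v, X v × M.I v → A v × M.O v}
    {x : ∀ v, X v} {a : ∀ v, A v} {o : ∀ v, M.O v} (ho : M.IsSolution μ x a o) :
    (M.reduce s (o s)).IsSolution (X := fun u => X u.1) (A := fun u => A u.1) (fun u => μ u.1)
      (fun u => x u.1) (fun u => a u.1) (fun u => o u.1) := fun u => by
  simpa only [CDModel.reduce, extendAt_restrict] using ho u.1

end Reduce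

end CDModel

namespace CDModel

variable {M : CDModel} (s : M.V) (os : M.O s)

/-- The removed source `s` gets trivial settings and results (the empty products
`∀ h : s ≠ s, _`) and always outputs `os`. -/
def extendIntervention {X' A' : {v // v ≠ s} → Type}
    (μ' : ∀ u, X' u × M.I u.1 → A' u × M.O u.1) (v : M.V) :
    (∀ h : v ≠ s, X' ⟨v, h⟩) × M.I v → (∀ h : v ≠ s, A' ⟨v, h⟩) × M.O v :=
  fun p => if h : v = s then (fun h' => absurd h h', h ▸ os)
    else (fun _ => (μ' ⟨v, h⟩ (p.1 h, p.2)).1, (μ' ⟨v, h⟩ (p.1 h, p.2)).2)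

theorem isSolution_extendIntervention_iff {X' A' : {v // v ≠ s} → Type}
    {μ' : ∀ u, X' u × M.I u.1 → A' u × M.O u.1} {x' : ∀ u, X' u} {a' : ∀ u, A' u}
    {o : ∀ v, M.O v} :
    M.IsSolution (M.extendIntervention s os μ') (fun v h => x' ⟨v, h⟩) (fun v h => a' ⟨v, h⟩) o ↔
      o s = os ∧ (M.reduce s os).IsSolution μ' x' a' fun u => o u.1 := by
  constructor
  · intro ho
    have hos : o s = os := by simpa [extendIntervention] using (congrArg Prod.snd (ho s)).symm
    refine ⟨hos, fun u => ?_⟩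
    have hu := ho u.1
    simp only [extendIntervention, dif_neg u.2, Prod.mk.injEq] at hu
    simpa only [CDModel.reduce, ← hos, extendAt_restrict] using Prod.ext (congrFun hu.1 u.2) hu.2
  · rintro ⟨rfl, ho⟩ v
    by_cases hv : v = s
    · subst hv
      simpa [extendIntervention] using funext fun h : v ≠ v => absurd rfl h
    · have hu := ho ⟨v, hv⟩
      simp only [CDModel.reduce, extendAt_restrict] at hu
      simp [extendIntervention, hv, hu]

theorem Consistent.reduce (hM : M.Consistent) : (M.reduce s os).Consistent := by
  rintro (X' : {v // v ≠ s} → Type) (A' : {v // v ≠ s} → Type) (_ : ∀ u, Fintype (X' u))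
    (_ : ∀ u, Nonempty (X' u)) (_ : ∀ u, Fintype (A' u)) (_ : ∀ u, Nonempty (A' u)) μ'
  obtain ⟨g, hg⟩ := hM (fun v => ∀ h : v ≠ s, X' ⟨v, h⟩) (fun v => ∀ h : v ≠ s, A' ⟨v, h⟩)
    (fun _ => .ofFinite _) (fun _ => inferInstance) (fun _ => .ofFinite _) (fun _ => inferInstance)
    (M.extendIntervention s os μ')
  refine ⟨fun x' u => g (fun v h => x' ⟨v, h⟩) u.1 u.2, isWitness_iff.2 fun x' a' => ?_⟩
  have hext : (fun v (h : v ≠ s) => a' ⟨v, h⟩) = g (fun v h => x' ⟨v, h⟩) ↔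
      a' = fun u : {v // v ≠ s} => g (fun v h => x' ⟨v, h⟩) u.1 u.2 :=
    ⟨fun h => funext fun u => congrFun (congrFun h u.1) u.2,
      fun h => funext fun v => funext fun hv => congrFun h ⟨v, hv⟩⟩
  calc Nat.card {o' // (M.reduce s os).IsSolution μ' x' a' o'}
      = Nat.card {o : ∀ v, M.O v // o s = os ∧ (M.reduce s os).IsSolution μ' x' a' fun u => o u.1} :=
        natCard_eq_natCard_extendAt s os _
    _ = Nat.card {o : ∀ v, M.O v // M.IsSolution (M.extendIntervention s os μ') (fun v h => x' ⟨v, h⟩)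
          (fun v h => a' ⟨v, h⟩) o} :=
        Nat.card_congr (Equiv.subtypeEquivRight fun _ => (isSolution_extendIntervention_iff s os).symm)
    _ = _ := by
        rw [isWitness_iff.1 hg]
        congr 1
        exact propext hext

theorem card_flowStep_lt (M : CDModel) (s : M.V) (os : M.O s) :
    Fintype.card (M.flowStep s os).V < Fintype.card M.V :=
  Fintype.card_subtype_lt (x := s) (by simp)

end CDModel

/-- **Trivial leaves of the flow give causal correlations.**
Let `(D, F)` be a consistent causal model and suppose that every model reachable from
it by flow steps (fixing an output of a source of the current causal structure,
reducing, and restricting to the dependency graph of the reduced parameters) that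
still has at least two vertices has at least one source vertex in its causal
structure.  Then for every family of interventions, the attained correlation
`p(a|x) = [g(x) = a]` is a causal correlation. -/
theorem stmt7 (M : CDModel) (hstruct : M.StructComp) (hcons : M.Consistent)
    (hreach : ∀ N : CDModel, Reaches M N → 2 ≤ Fintype.card N.V → ∃ s : N.V, N.IsSource s)
    (X A : M.V → Type) [∀ v, Fintype (X v)] [∀ v, Nonempty (X v)]
    [∀ v, Fintype (A v)] [∀ v, Nonempty (A v)]
    (μ : ∀ v, X v × M.I v → A v × M.O v)
    (g : (∀ v, X v) → ∀ v, A v) (hg : M.IsWitness X A μ g) :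
    IsCausal M.V X A (detCorr g) := by
  classical
  by_cases hcard : Fintype.card M.V ≤ 1
  · exact .base _ hcard
  obtain ⟨s, hs⟩ := hreach M (.refl M) (by omega)
  let i₀ := M.ω s fun _ => Classical.arbitrary _
  have hi₀ : ∀ o, M.ω s o = i₀ := fun o => hstruct.omega_eq_of_isSource hs o _
  let os : X s → M.O s := fun xs => (μ s (xs, i₀)).2
  have hcons' : ∀ xs, (M.flowStep s (os xs)).Consistent := fun xs => hcons.reduce s (os xs)
  choose g' hg' using fun xs => hcons' xs (fun u => X u.1) (fun u => A u.1) inferInstance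
    inferInstance inferInstance inferInstance fun u => μ u.1
  refine .of_first s _ (fun xs as => if as = (μ s (xs, i₀)).1 then 1 else 0)
    (fun _ _ => by positivity) (fun _ => by simp) (fun xs _ => detCorr (g' xs))
    (fun xs _ => stmt7 _ (CDModel.structComp_restrictDep _) (hcons' xs)
      (fun N hN => hreach N (.tail s hs (os xs) hN)) _ _ _ _ (hg' xs)) fun x a => ?_
  obtain ⟨o, ho⟩ := hg.exists_isSolution x
  have hμs : μ s (x s, i₀) = (g x s, o s) := hi₀ o ▸ ho s
  have hos : o s = os (x s) := (congrArg Prod.snd hμs).symm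
  have hrest : (fun u : {v // v ≠ s} => g x u.1) = g' (x s) fun u => x u.1 :=
    (hg' (x s)).eq_of_isSolution (hos ▸ ho.reduce s)
  simp only [detCorr]
  rw [ite_eq_mul_ite_restrict s, hμs]
  simp only [hrest]
  rfl
termination_by Fintype.card M.V
decreasing_by exact CDModel.card_flowStep_lt M s (os xs)
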